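/- In the semigroup T = X⁺/ρ_R the following relations hold: for every w ∈ A⁺, e f̌(w) e = f̂(w); and for every z ∈ A⁺ \ L, e f̌(z) = f́(z) and f̌(z) e = f̀(z) (equalities meaning that the corresponding words over X are ρ_R-equivalent). -/

import Mathlib

open List

variable {A : Type*} {G : Type*} {A_G : Type*}

/-- `L̈`: the words not in `L` whose maximal proper prefix and suffix are in `L`. -/
def Ddot (L : Set (List A)) : Set (List A) :=
  {v | v ∉ L ∧ v.dropLast ∈ L ∧ v.tail ∈ L}

/-- `IsSc L w s` : `s` is the sequence of coordinates of `w` determined by `L`,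
via the recursive construction of the paper: if `w ∈ L` then `s = (w)`; otherwise
select an occurrence `w = w' v w''` of a factor `v ∈ L̈` and put
`s = sc_L[w' v_α] (v) sc_L[v_ω w'']`. -/
inductive IsSc (L : Set (List A)) : List A → List (List A) → Prop
  | base (w : List A) (hw : w ∈ L) : IsSc L w [w]
  | step (w' w'' v : List A) (s₁ s₂ : List (List A)) (hv : v ∈ Ddot L)
      (h₁ : IsSc L (w' ++ v.dropLast) s₁) (h₂ : IsSc L (v.tail ++ w'') s₂) :
      IsSc L (w' ++ v ++ w'') (s₁ ++ v :: s₂)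

open Classical in
/-- `sc_L[w]`, the sequence of coordinates of `w` determined by `L`. -/
noncomputable def scL (L : Set (List A)) (w : List A) : List (List A) :=
  if h : ∃ s, IsSc L w s then h.choose else []
section CoreG
variable [Group G]

/-- Evaluation of a word over `A_G` in the group `G`. -/
def evalW (evA : A_G → G) (u : List A_G) : G := (u.map evA).prod

/-- `f̂ : A* → G`. -/
noncomputable def fhat (L : Set (List A)) (f : List A → G) (w : List A) : G :=
  ((scL L w).map f).prod

/-- first coordinate (word part of `f̀`). -/
noncomputable def graveWord (L : Set (List A)) (w : List A) : List A :=
  (scL L w).headI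

/-- group part of `f̀`. -/
noncomputable def graveG (L : Set (List A)) (f : List A → G) (w : List A) : G :=
  ((scL L w).tail.map f).prod

/-- last coordinate (word part of `f́`). -/
noncomputable def acuteWord (L : Set (List A)) (w : List A) : List A :=
  (scL L w).getLastD []

/-- group part of `f́`. -/
noncomputable def acuteG (L : Set (List A)) (f : List A → G) (w : List A) : G :=
  ((scL L w).dropLast.map f).prod

/-- The word over `X = A ⊕ A_G` determined by a coordinate sequence:
`w₀ f(ẅ₁)f(w₁)⋯f(ẅ_m) w_m`, the middle group element written as its
chosen representative word over `A_G`. -/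
def checkOfSeq (f : List A → G) (rep : G → List A_G) :
    List (List A) → List (A ⊕ A_G)
  | [] => []
  | [w] => w.map Sum.inl
  | w :: rest =>
      w.map Sum.inl ++ (rep ((rest.dropLast.map f).prod)).map Sum.inr ++
        (rest.getLastD []).map Sum.inl

/-- longest prefix of `A`-letters. -/
def takeA : List (A ⊕ A_G) → List A
  | Sum.inl a :: r => a :: takeA r
  | _ => []

def dropA : List (A ⊕ A_G) → List (A ⊕ A_G)
  | Sum.inl _ :: r => dropA r
  | w => w

/-- longest prefix of `A_G`-letters. -/
def takeG : List (A ⊕ A_G) → List A_G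
  | Sum.inr b :: r => b :: takeG r
  | _ => []

def dropG : List (A ⊕ A_G) → List (A ⊕ A_G)
  | Sum.inr _ :: r => dropG r
  | w => w

/-- Processing of the part `g₁u₁g₂u₂⋯g_nu_n` of a mixed word: returns the group
element `eval(g₁)·f̂(u₁)·…·eval(g_n)·(acute part of u_n)` together with the final
word coordinate of `u_n`.  (Fuel-based recursion.) -/
noncomputable def midRunAux (L : Set (List A)) (f : List A → G) (evA : A_G → G) :
    ℕ → List (A ⊕ A_G) → G × List A
  | 0, _ => (1, [])
  | n + 1, w =>
      match dropA (dropG w) with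
      | [] => (evalW evA (takeG w) * acuteG L f (takeA (dropG w)),
               acuteWord L (takeA (dropG w)))
      | r' => (evalW evA (takeG w) * fhat L f (takeA (dropG w)) *
                 (midRunAux L f evA n r').1,
               (midRunAux L f evA n r').2)

/-- The extension `f̌ : X⁺ → Z ⊆ X⁺` of `f̌` to mixed words
(`f̌(u₀g₁u₁⋯g_nu_n) = f̀(u₀) g₁ f̂(u₁) ⋯ g_n f́(u_n)`, the middle group
element written as its representative word). -/
noncomputable def fcheckX (L : Set (List A)) (f : List A → G) (evA : A_G → G)
    (rep : G → List A_G) (w : List (A ⊕ A_G)) : List (A ⊕ A_G) :=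
  match dropA w with
  | [] => checkOfSeq f rep (scL L (takeA w))
  | r =>
      (graveWord L (takeA w)).map Sum.inl ++
        (rep (graveG L f (takeA w) * (midRunAux L f evA r.length r).1)).map Sum.inr ++
        (midRunAux L f evA r.length r).2.map Sum.inl

end CoreG
/-- The smallest (semigroup) congruence on words containing the relation `R`. -/
inductive Cong {X : Type*} (R : List X → List X → Prop) : List X → List X → Prop
  | of {u v : List X} : R u v → Cong R u v
  | refl (u : List X) : Cong R u u
  | symm {u v : List X} : Cong R u v → Cong R v u
  | trans {u v w : List X} : Cong R u v → Cong R v w → Cong R u w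
  | left (w : List X) {u v : List X} : Cong R u v → Cong R (w ++ u) (w ++ v)
  | right (w : List X) {u v : List X} : Cong R u v → Cong R (u ++ w) (v ++ w)

section CoreRel
variable [Group G]

/-- The relation `R = R_G ∪ R_f` over `X = A ⊕ A_G`, where
`R_f = {eue = f(u) : u ∈ L} ∪ {v̈ = v̈_α f(v̈) v̈_ω : v̈ ∈ L̈}`,
`e = rep 1` the chosen word representing `1_G`, group elements
read as their representative words. -/
inductive RelR (L : Set (List A)) (RG : List A_G → List A_G → Prop)
    (f : List A → G) (rep : G → List A_G) :
    List (A ⊕ A_G) → List (A ⊕ A_G) → Prop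
  | ofG {u v : List A_G} : RG u v → RelR L RG f rep (u.map Sum.inr) (v.map Sum.inr)
  | rU {u : List A} (hu : u ∈ L) :
      RelR L RG f rep
        ((rep 1).map Sum.inr ++ u.map Sum.inl ++ (rep 1).map Sum.inr)
        ((rep (f u)).map Sum.inr)
  | rV {v : List A} (hv : v ∈ Ddot L) :
      RelR L RG f rep (v.map Sum.inl)
        (v.dropLast.map Sum.inl ++ (rep (f v)).map Sum.inr ++ v.tail.map Sum.inl)

end CoreRel

/-!
Every nonempty word `w` has a coordinate sequence, obtained by cutting `w` at an occurrence of a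
factor in `L̈` (one exists inside any word outside `L`, since letters lie in `L`), and its first
and last coordinates lie in `L`. In `T` the representative words multiply as in `G`, so `e`
absorbs into any group block: `e · g = g · e = g`. Hence inserting `e` next to the middle group
block of `f̌(w)` and applying `e u e = f(u)` to the first and last coordinates absorbs them into
the group element.
-/

instance Cong.instTrans {X : Type*} {R : List X → List X → Prop} :
    Trans (Cong R) (Cong R) (Cong R) :=
  ⟨Cong.trans⟩

section Coordinates
variable {L : Set (List A)}

theorem exists_mem_Ddot_infix (hA : ∀ a : A, [a] ∈ L) {v : List A} (hv : v ≠ [])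
    (hvL : v ∉ L) : ∃ u ∈ Ddot L, u <:+: v := by
  have hlen : 2 ≤ v.length := by
    match v, hv with
    | [a], _ => exact absurd (hA a) hvL
    | _ :: _ :: _, _ => simp
  by_cases hα : v.dropLast ∈ L
  · by_cases hω : v.tail ∈ L
    · exact ⟨v, ⟨hvL, hα, hω⟩, List.infix_refl v⟩
    · obtain ⟨u, hu, hinf⟩ := exists_mem_Ddot_infix hA
        (v := v.tail) (List.ne_nil_of_length_pos (by simp; omega)) hω
      exact ⟨u, hu, hinf.trans v.tail_suffix.isInfix⟩
  · obtain ⟨u, hu, hinf⟩ := exists_mem_Ddot_infix hA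
      (v := v.dropLast) (List.ne_nil_of_length_pos (by simp; omega)) hα
    exact ⟨u, hu, hinf.trans v.dropLast_prefix.isInfix⟩
termination_by v.length
decreasing_by all_goals simp; omega

theorem exists_isSc (hE : [] ∉ L) (hA : ∀ a : A, [a] ∈ L) {w : List A} (hw : w ≠ []) :
    ∃ s, IsSc L w s := by
  by_cases hwL : w ∈ L
  · exact ⟨[w], .base w hwL⟩
  obtain ⟨v, hv, w', w'', hsplit⟩ := exists_mem_Ddot_infix hA hw hwL
  have hα : v.dropLast ≠ [] := fun h => hE (h ▸ hv.2.1)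
  have hω : v.tail ≠ [] := fun h => hE (h ▸ hv.2.2)
  obtain ⟨s₁, h₁⟩ := exists_isSc hE hA (w := w' ++ v.dropLast) (by simp [hα])
  obtain ⟨s₂, h₂⟩ := exists_isSc hE hA (w := v.tail ++ w'') (by simp [hω])
  subst hsplit
  exact ⟨_, .step w' w'' v s₁ s₂ hv h₁ h₂⟩
termination_by w.length
decreasing_by
  all_goals
    have := List.length_pos_iff.mpr hα
    have := v.length_dropLast
    have := v.length_tail
    subst hsplit
    simp only [List.length_append]
    omega

theorem scL_isSc (hE : [] ∉ L) (hA : ∀ a : A, [a] ∈ L) {w : List A} (hw : w ≠ []) :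
    IsSc L w (scL L w) := by
  have hex := exists_isSc hE hA hw
  rw [scL, dif_pos hex]
  exact hex.choose_spec

theorem IsSc.exists_eq_cons {w : List A} {s : List (List A)} (h : IsSc L w s) :
    ∃ w₀ ∈ L, ∃ t, s = w₀ :: t := by
  induction h with
  | base w hw => exact ⟨w, hw, [], rfl⟩
  | step _ _ v _ s₂ _ _ _ ih₁ _ =>
    obtain ⟨w₀, h₀, t, rfl⟩ := ih₁
    exact ⟨w₀, h₀, t ++ v :: s₂, rfl⟩

theorem IsSc.exists_eq_concat {w : List A} {s : List (List A)} (h : IsSc L w s) :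
    ∃ t, ∃ wₘ ∈ L, s = t ++ [wₘ] := by
  induction h with
  | base w hw => exact ⟨[], w, hw, rfl⟩
  | step _ _ v s₁ _ _ _ _ _ ih₂ =>
    obtain ⟨t, wₘ, hₘ, rfl⟩ := ih₂
    exact ⟨s₁ ++ v :: t, wₘ, hₘ, by simp⟩

theorem IsSc.eq_singleton_or {w : List A} {s : List (List A)} (h : IsSc L w s) :
    (w ∈ L ∧ s = [w]) ∨ ∃ w₀ ∈ L, ∃ m, ∃ wₘ ∈ L, s = w₀ :: (m ++ [wₘ]) := by
  cases h with
  | base w hw => exact .inl ⟨hw, rfl⟩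
  | step _ _ v _ _ _ h₁ h₂ =>
    obtain ⟨w₀, h₀, t, rfl⟩ := h₁.exists_eq_cons
    obtain ⟨t', wₘ, hₘ, rfl⟩ := h₂.exists_eq_concat
    exact .inr ⟨w₀, h₀, t ++ v :: t', wₘ, hₘ, by simp⟩

end Coordinates

section Presentation
variable [Group G] {L : Set (List A)} {RG : List A_G → List A_G → Prop} {f : List A → G}
  {rep : G → List A_G} {evA : A_G → G}

theorem evalW_append (u v : List A_G) : evalW evA (u ++ v) = evalW evA u * evalW evA v := by
  simp [evalW]

theorem Cong.map_inr {u v : List A_G} (h : Cong RG u v) :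
    Cong (RelR L RG f rep) (u.map Sum.inr) (v.map Sum.inr) := by
  induction h with
  | of h => exact .of (.ofG h)
  | refl u => exact .refl _
  | symm _ ih => exact ih.symm
  | trans _ _ ih₁ ih₂ => exact ih₁.trans ih₂
  | left w _ ih => simpa only [List.map_append] using ih.left _
  | right w _ ih => simpa only [List.map_append] using ih.right _

theorem checkOfSeq_cons_concat (w₀ : List A) (m : List (List A)) (wₘ : List A) :
    checkOfSeq f rep (w₀ :: (m ++ [wₘ])) =
      w₀.map Sum.inl ++ (rep (m.map f).prod).map Sum.inr ++ wₘ.map Sum.inl := by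
  obtain ⟨x, r, hxr⟩ := List.exists_cons_of_ne_nil (List.concat_ne_nil wₘ m)
  rw [hxr, checkOfSeq, ← hxr] <;> simp

theorem cong_rep_mul
    (hRG : ∀ u v : List A_G, u ≠ [] → v ≠ [] → evalW evA u = evalW evA v → Cong RG u v)
    (hrepne : ∀ g : G, rep g ≠ []) (hrep : ∀ g : G, evalW evA (rep g) = g) (g h : G) :
    Cong (RelR L RG f rep) ((rep g).map Sum.inr ++ (rep h).map Sum.inr)
      ((rep (g * h)).map Sum.inr) := by
  rw [← List.map_append]
  refine Cong.map_inr (hRG _ _ (by simp [hrepne g]) (hrepne _) ?_)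
  rw [evalW_append, hrep, hrep, hrep]

local notation:50 a " ≡ᵀ " b => Cong (RelR L RG f rep) a b

theorem cong_rep_one_append_mem_append_rep
    (hmul : ∀ g h : G, (rep g).map Sum.inr ++ (rep h).map Sum.inr ≡ᵀ (rep (g * h)).map Sum.inr)
    {u : List A} (hu : u ∈ L) (g : G) :
    (rep 1).map Sum.inr ++ u.map Sum.inl ++ (rep g).map Sum.inr ≡ᵀ (rep (f u * g)).map Sum.inr :=
  have hg : (rep 1).map Sum.inr ++ (rep g).map Sum.inr ≡ᵀ (rep g).map Sum.inr := by
    simpa using hmul 1 g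
  calc _
    _ ≡ᵀ ((rep 1).map Sum.inr ++ u.map Sum.inl) ++ ((rep 1).map Sum.inr ++ (rep g).map Sum.inr) :=
      .left _ hg.symm
    _ = ((rep 1).map Sum.inr ++ u.map Sum.inl ++ (rep 1).map Sum.inr) ++ (rep g).map Sum.inr := by
      simp only [List.append_assoc]
    _ ≡ᵀ (rep (f u)).map Sum.inr ++ (rep g).map Sum.inr := .right _ (.of (.rU hu))
    _ ≡ᵀ _ := hmul _ _

theorem cong_rep_append_mem_append_rep_one
    (hmul : ∀ g h : G, (rep g).map Sum.inr ++ (rep h).map Sum.inr ≡ᵀ (rep (g * h)).map Sum.inr)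
    {u : List A} (hu : u ∈ L) (g : G) :
    (rep g).map Sum.inr ++ u.map Sum.inl ++ (rep 1).map Sum.inr ≡ᵀ (rep (g * f u)).map Sum.inr :=
  have hg : (rep g).map Sum.inr ++ (rep 1).map Sum.inr ≡ᵀ (rep g).map Sum.inr := by
    simpa using hmul g 1
  calc _
    _ = (rep g).map Sum.inr ++ (u.map Sum.inl ++ (rep 1).map Sum.inr) := List.append_assoc ..
    _ ≡ᵀ ((rep g).map Sum.inr ++ (rep 1).map Sum.inr) ++ (u.map Sum.inl ++ (rep 1).map Sum.inr) :=
      .right _ hg.symm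
    _ = (rep g).map Sum.inr ++ ((rep 1).map Sum.inr ++ u.map Sum.inl ++ (rep 1).map Sum.inr) := by
      simp only [List.append_assoc]
    _ ≡ᵀ (rep g).map Sum.inr ++ (rep (f u)).map Sum.inr := .left _ (.of (.rU hu))
    _ ≡ᵀ _ := hmul _ _

theorem cong_rep_one_append_checkOfSeq_append_rep_one
    (hmul : ∀ g h : G, (rep g).map Sum.inr ++ (rep h).map Sum.inr ≡ᵀ (rep (g * h)).map Sum.inr)
    {w₀ wₘ : List A} (h₀ : w₀ ∈ L) (hₘ : wₘ ∈ L) (m : List (List A)) :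
    (rep 1).map Sum.inr ++ checkOfSeq f rep (w₀ :: (m ++ [wₘ])) ++ (rep 1).map Sum.inr ≡ᵀ
      (rep (f w₀ * (m.map f).prod * f wₘ)).map Sum.inr := by
  rw [checkOfSeq_cons_concat]
  calc _
    _ = (rep 1).map Sum.inr ++ w₀.map Sum.inl ++ (rep (m.map f).prod).map Sum.inr ++
        wₘ.map Sum.inl ++ (rep 1).map Sum.inr := by
      simp only [List.append_assoc]
    _ ≡ᵀ (rep (f w₀ * (m.map f).prod)).map Sum.inr ++ wₘ.map Sum.inl ++ (rep 1).map Sum.inr :=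
      .right _ (.right _ (cong_rep_one_append_mem_append_rep hmul h₀ _))
    _ ≡ᵀ _ := cong_rep_append_mem_append_rep_one hmul hₘ _

theorem cong_rep_one_append_checkOfSeq
    (hmul : ∀ g h : G, (rep g).map Sum.inr ++ (rep h).map Sum.inr ≡ᵀ (rep (g * h)).map Sum.inr)
    {w₀ : List A} (h₀ : w₀ ∈ L) (m : List (List A)) (wₘ : List A) :
    (rep 1).map Sum.inr ++ checkOfSeq f rep (w₀ :: (m ++ [wₘ])) ≡ᵀ
      (rep (f w₀ * (m.map f).prod)).map Sum.inr ++ wₘ.map Sum.inl := by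
  rw [checkOfSeq_cons_concat, ← List.append_assoc, ← List.append_assoc]
  exact .right _ (cong_rep_one_append_mem_append_rep hmul h₀ _)

theorem cong_checkOfSeq_append_rep_one
    (hmul : ∀ g h : G, (rep g).map Sum.inr ++ (rep h).map Sum.inr ≡ᵀ (rep (g * h)).map Sum.inr)
    (w₀ : List A) (m : List (List A)) {wₘ : List A} (hₘ : wₘ ∈ L) :
    checkOfSeq f rep (w₀ :: (m ++ [wₘ])) ++ (rep 1).map Sum.inr ≡ᵀ
      w₀.map Sum.inl ++ (rep ((m.map f).prod * f wₘ)).map Sum.inr := by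
  rw [checkOfSeq_cons_concat]
  simpa only [List.append_assoc] using
    Cong.left (w₀.map Sum.inl) (cong_rep_append_mem_append_rep_one hmul hₘ (m.map f).prod)

end Presentation

theorem relations_in_T_general [Group G]
    (L : Set (List A)) (hE : [] ∉ L)
    (hA : ∀ a : A, [a] ∈ L)
    (RG : List A_G → List A_G → Prop) (evA : A_G → G)
    (hpres : ∀ u v : List A_G, u ≠ [] → v ≠ [] →
      (Cong RG u v ↔ evalW evA u = evalW evA v))
    (rep : G → List A_G) (hrepne : ∀ g : G, rep g ≠ [])
    (hrep : ∀ g : G, evalW evA (rep g) = g)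
    (f : List A → G) :
    (∀ w : List A, w ≠ [] →
      Cong (RelR L RG f rep)
        ((rep 1).map Sum.inr ++ checkOfSeq f rep (scL L w) ++ (rep 1).map Sum.inr)
        ((rep (fhat L f w)).map Sum.inr)) ∧
    (∀ z : List A, z ≠ [] → z ∉ L →
      Cong (RelR L RG f rep)
        ((rep 1).map Sum.inr ++ checkOfSeq f rep (scL L z))
        ((rep (acuteG L f z)).map Sum.inr ++ (acuteWord L z).map Sum.inl) ∧
      Cong (RelR L RG f rep)
        (checkOfSeq f rep (scL L z) ++ (rep 1).map Sum.inr)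
        ((graveWord L z).map Sum.inl ++ (rep (graveG L f z)).map Sum.inr)) := by
  have hmul := cong_rep_mul (L := L) (f := f) (fun u v hu hv => (hpres u v hu hv).mpr) hrepne hrep
  refine ⟨fun w hw => ?_, fun z hz hzL => ?_⟩
  · rcases (scL_isSc hE hA hw).eq_singleton_or with ⟨hwL, hs⟩ | ⟨w₀, h₀, m, wₘ, hₘ, hs⟩
    · simpa [fhat, hs, checkOfSeq] using Cong.of (RelR.rU (RG := RG) (rep := rep) hwL)
    · simpa [fhat, hs, mul_assoc] using
        cong_rep_one_append_checkOfSeq_append_rep_one hmul h₀ hₘ m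
  · rcases (scL_isSc hE hA hz).eq_singleton_or with ⟨hzL', -⟩ | ⟨w₀, h₀, m, wₘ, hₘ, hs⟩
    · exact absurd hzL' hzL
    · have hα : (w₀ :: (m ++ [wₘ])).dropLast = w₀ :: m := List.dropLast_concat (l₁ := w₀ :: m)
      have hω : (w₀ :: (m ++ [wₘ])).getLastD [] = wₘ := List.getLastD_concat (l := w₀ :: m)
      simp only [acuteG, acuteWord, graveG, graveWord, hs, hα, hω, List.headI_cons, List.tail_cons,
        List.map_cons, List.map_append, List.prod_cons, List.prod_append, List.map_nil,
        List.prod_nil, mul_one]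
      exact ⟨cong_rep_one_append_checkOfSeq hmul h₀ m wₘ, cong_checkOfSeq_append_rep_one hmul w₀ m hₘ⟩

/-- equation (4). In the semigroup `T = X⁺/ρ_R` the following
relations hold: for every `w ∈ A⁺`, `e f̌(w) e = f̂(w)`; and for every
`z ∈ A⁺ \ L`, `e f̌(z) = f́(z)` and `f̌(z) e = f̀(z)` (equalities meaning that
the corresponding words over `X = A ⊕ A_G` are `ρ_R`-equivalent). -/
theorem relations_in_T [Nonempty A] [Group G]
    (L : Set (List A)) (hE : [] ∉ L)
    (hFac : ∀ u w : List A, w ∈ L → u ≠ [] → u <:+: w → u ∈ L)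
    (hA : ∀ a : A, [a] ∈ L)
    (RG : List A_G → List A_G → Prop) (evA : A_G → G)
    (hRGne : ∀ u v : List A_G, RG u v → u ≠ [] ∧ v ≠ [])
    (hpres : ∀ u v : List A_G, u ≠ [] → v ≠ [] →
      (Cong RG u v ↔ evalW evA u = evalW evA v))
    (rep : G → List A_G) (hrepne : ∀ g : G, rep g ≠ [])
    (hrep : ∀ g : G, evalW evA (rep g) = g)
    (f : List A → G) :
    (∀ w : List A, w ≠ [] →
      Cong (RelR L RG f rep)
        ((rep 1).map Sum.inr ++ checkOfSeq f rep (scL L w) ++ (rep 1).map Sum.inr)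
        ((rep (fhat L f w)).map Sum.inr)) ∧
    (∀ z : List A, z ≠ [] → z ∉ L →
      Cong (RelR L RG f rep)
        ((rep 1).map Sum.inr ++ checkOfSeq f rep (scL L z))
        ((rep (acuteG L f z)).map Sum.inr ++ (acuteWord L z).map Sum.inl) ∧
      Cong (RelR L RG f rep)
        (checkOfSeq f rep (scL L z) ++ (rep 1).map Sum.inr)
        ((graveWord L z).map Sum.inl ++ (rep (graveG L f z)).map Sum.inr)) :=
  relations_in_T_general L hE hA RG evA hpres rep hrepne hrep f
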